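/- Let X be a metric surface and f : X → ℝ² a continuous map satisfying Lusin's condition (N). Fix t ∈ (1,2), k ∈ ℤ, and a compact set A ⊂ X such that every x ∈ A is an H²-density point, t^{k−1} ≤ J_f(x) ≤ t^k for every x ∈ A, and every x ∈ A has an open neighborhood on which f is injective. Then ∫_{ℝ²} N(y, f, A) dy ≤ t ∫_A J_f dH², where the integral on the left is with respect to 2-dimensional Lebesgue measure. -/

import Mathlib

/-!
Up to an `H²`-null set, cover `A` by a countable disjoint Vitali family of small closed balls
`B` in a thin neighbourhood of `A`, on each of which `f` is injective, `m₂(f B) ≤ c π r²` (as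
`J_f < c` at the centre) and `θ π r² ≤ H²(B)`; density also makes `H²` doubling on these
balls, as Vitali requires. Condition (N) makes the image of the uncovered part null, so
`θ ∫ N(y, f, A) dy ≤ θ Σ m₂(f B) ≤ c Σ H²(B)`. Letting `θ → 1`, `c ↓ t^k` and the
neighbourhood shrink to `A` gives `∫ N ≤ t^k H²(A) ≤ t ∫_A J_f`, because `J_f ≥ t^(k-1)`
on `A`.
-/

open MeasureTheory Metric Set Filter
open scoped ENNReal NNReal Topology

/-- The generalized Jacobian `J_f(x) = limsup_{r→0+} m₂(f(B̄(x,r)))/(π r²)`, where `m₂` is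
the 2-dimensional Lebesgue (outer) measure on `ℝ²` and `B̄(x,r)` is the closed ball. -/
noncomputable def jacobianJ {X : Type*} [MetricSpace X]
    (f : X → EuclideanSpace ℝ (Fin 2)) (x : X) : ℝ≥0∞ :=
  Filter.limsup
    (fun r : ℝ => volume (f '' Metric.closedBall x r) / ENNReal.ofReal (Real.pi * r ^ 2))
    (𝓝[>] (0 : ℝ))

/-- The multiplicity function `N(y, f, A)`: the number of preimages of `y` under `f`
lying in `A`, as an extended nonnegative real. -/
noncomputable def multN {X : Type*}
    (f : X → EuclideanSpace ℝ (Fin 2)) (A : Set X) (y : EuclideanSpace ℝ (Fin 2)) : ℝ≥0∞ :=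
  ({x ∈ A | f x = y}).encard

/-- `x` is an `H²`-density point of the metric space `X`:
`H²(B̄(x,r))/(π r²) → 1` as `r → 0+`. -/
def IsH2DensityPoint {X : Type*} [MetricSpace X] [MeasurableSpace X] [BorelSpace X] (x : X) : Prop :=
  Filter.Tendsto
    (fun r : ℝ => μH[2] (Metric.closedBall x r) / ENNReal.ofReal (Real.pi * r ^ 2))
    (𝓝[>] (0 : ℝ)) (𝓝 1)

theorem Set.encard_iUnion_le_tsum {α ι : Type*} (s : ι → Set α) :
    ((⋃ i, s i).encard : ℝ≥0∞) ≤ ∑' i, ((s i).encard : ℝ≥0∞) := by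
  simpa only [ENNReal.tsum_set_one] using ENNReal.tsum_iUnion_le_tsum (fun _ ↦ 1) s

section Multiplicity

variable {α β ι : Type*} {f : α → β} {A : Set α} {B : ι → Set α}

theorem encard_fiber_le_tsum_indicator (hinj : ∀ i, InjOn f (B i)) {y : β}
    (hy : y ∉ f '' (A \ ⋃ i, B i)) :
    ({x ∈ A | f x = y}.encard : ℝ≥0∞) ≤ ∑' i, (f '' B i).indicator 1 y := by
  have hcover : {x ∈ A | f x = y} ⊆ ⋃ i, {x ∈ A | f x = y} ∩ B i := by
    intro x hx
    by_contra hxB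
    exact hy ⟨x, ⟨hx.1, fun hxU ↦ hxB (by simpa [← inter_iUnion] using And.intro hx hxU)⟩, hx.2⟩
  refine (ENat.toENNReal_mono (encard_le_encard hcover)).trans <| (encard_iUnion_le_tsum _).trans <|
    ENNReal.tsum_le_tsum fun i ↦ ?_
  rcases eq_empty_or_nonempty ({x ∈ A | f x = y} ∩ B i) with hempty | ⟨z, hzA, hzB⟩
  · simp [hempty]
  · have hsub : ({x ∈ A | f x = y} ∩ B i).Subsingleton := fun w hw w' hw' ↦
      hinj i hw.2 hw'.2 (hw.1.2.trans hw'.1.2.symm)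
    rw [indicator_of_mem (hzA.2 ▸ mem_image_of_mem f hzB), Pi.one_apply]
    exact_mod_cast encard_le_one_iff_subsingleton.2 hsub

variable [MeasurableSpace β] {ν : Measure β} [Countable ι]

theorem lintegral_encard_fiber_le_tsum (hinj : ∀ i, InjOn f (B i))
    (hnull : ν (f '' (A \ ⋃ i, B i)) = 0) :
    ∫⁻ y, ({x ∈ A | f x = y}.encard : ℝ≥0∞) ∂ν ≤ ∑' i, ν (f '' B i) := by
  calc ∫⁻ y, ({x ∈ A | f x = y}.encard : ℝ≥0∞) ∂ν
      ≤ ∫⁻ y, ∑' i, (toMeasurable ν (f '' B i)).indicator 1 y ∂ν := by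
        refine lintegral_mono_ae <| (measure_eq_zero_iff_ae_notMem.1 hnull).mono fun y hy ↦ ?_
        refine (encard_fiber_le_tsum_indicator hinj hy).trans <| ENNReal.tsum_le_tsum fun i ↦ ?_
        exact indicator_le_indicator_of_subset (subset_toMeasurable _ _) (fun _ ↦ bot_le) y
    _ = ∑' i, ν (f '' B i) := by
        rw [lintegral_tsum fun i ↦ (measurable_one.indicator
          (measurableSet_toMeasurable _ _)).aemeasurable]
        simp_rw [lintegral_indicator_one (measurableSet_toMeasurable _ _), measure_toMeasurable]

end Multiplicity

section Balls

variable {X : Type*} [MetricSpace X] {x : X}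

theorem ofReal_pi_mul_sq_ne_zero {r : ℝ} (hr : 0 < r) : ENNReal.ofReal (Real.pi * r ^ 2) ≠ 0 :=
  (ENNReal.ofReal_pos.2 (by positivity)).ne'

theorem eventually_measure_image_closedBall_le_of_jacobianJ_lt
    {f : X → EuclideanSpace ℝ (Fin 2)} {c : ℝ≥0∞} (hJ : jacobianJ f x < c) :
    ∀ᶠ r in 𝓝[>] (0 : ℝ),
      volume (f '' closedBall x r) ≤ c * ENNReal.ofReal (Real.pi * r ^ 2) := by
  filter_upwards [eventually_lt_of_limsup_lt hJ, self_mem_nhdsWithin] with r hr (hr0 : 0 < r)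
  exact (ENNReal.div_le_iff_le_mul (.inl (ofReal_pi_mul_sq_ne_zero hr0))
    (.inl ENNReal.ofReal_ne_top)).1 hr.le

variable [MeasurableSpace X]

def IsAreaDensityPoint (μ : Measure X) (x : X) : Prop :=
  Tendsto (fun r : ℝ => μ (closedBall x r) / ENNReal.ofReal (Real.pi * r ^ 2)) (𝓝[>] 0) (𝓝 1)

variable {μ : Measure X}

theorem IsAreaDensityPoint.eventually_mul_le_measure_closedBall (hx : IsAreaDensityPoint μ x)
    {θ : ℝ≥0∞} (hθ : θ < 1) :
    ∀ᶠ r in 𝓝[>] (0 : ℝ), θ * ENNReal.ofReal (Real.pi * r ^ 2) ≤ μ (closedBall x r) := by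
  filter_upwards [hx.eventually_const_lt hθ, self_mem_nhdsWithin] with r hr (hr0 : 0 < r)
  exact (ENNReal.le_div_iff_mul_le (.inl (ofReal_pi_mul_sq_ne_zero hr0))
    (.inl ENNReal.ofReal_ne_top)).1 hr.le

theorem IsAreaDensityPoint.eventually_measure_closedBall_le_mul (hx : IsAreaDensityPoint μ x)
    {θ : ℝ≥0∞} (hθ : 1 < θ) :
    ∀ᶠ r in 𝓝[>] (0 : ℝ), μ (closedBall x r) ≤ θ * ENNReal.ofReal (Real.pi * r ^ 2) := by
  filter_upwards [hx.eventually_lt_const hθ, self_mem_nhdsWithin] with r hr (hr0 : 0 < r)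
  exact (ENNReal.div_le_iff_le_mul (.inl (ofReal_pi_mul_sq_ne_zero hr0))
    (.inl ENNReal.ofReal_ne_top)).1 hr.le

theorem IsAreaDensityPoint.eventually_measure_closedBall_three_mul_le
    (hx : IsAreaDensityPoint μ x) :
    ∀ᶠ r in 𝓝[>] (0 : ℝ), μ (closedBall x (3 * r)) ≤ 36 * μ (closedBall x r) := by
  have h3 : Tendsto (fun r : ℝ => 3 * r) (𝓝[>] 0) (𝓝[>] 0) :=
    tendsto_nhdsWithin_of_tendsto_nhds_of_eventually_within _
      (((continuous_const_mul 3).tendsto' 0 0 (mul_zero 3)).mono_left nhdsWithin_le_nhds)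
      (by filter_upwards [self_mem_nhdsWithin] with r (hr : 0 < r); exact mul_pos three_pos hr)
  filter_upwards [h3.eventually (hx.eventually_measure_closedBall_le_mul ENNReal.one_lt_two),
    hx.eventually_mul_le_measure_closedBall ENNReal.one_half_lt_one] with r hupper hlower
  calc μ (closedBall x (3 * r)) ≤ 2 * ENNReal.ofReal (Real.pi * (3 * r) ^ 2) := hupper
    _ = 36 * (2⁻¹ * ENNReal.ofReal (Real.pi * r ^ 2)) := by
      rw [show Real.pi * (3 * r) ^ 2 = 9 * (Real.pi * r ^ 2) by ring,
        ENNReal.ofReal_mul (by norm_num), ENNReal.ofReal_ofNat, ← mul_assoc,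
        show (36 : ℝ≥0∞) = 18 * 2 by norm_num, mul_assoc 18, ← mul_assoc 2,
        ENNReal.mul_inv_cancel two_ne_zero ENNReal.ofNat_ne_top, one_mul]
      norm_num
    _ ≤ 36 * μ (closedBall x r) := by gcongr

theorem IsAreaDensityPoint.eventually_mul_measure_image_closedBall_le
    (hx : IsAreaDensityPoint μ x) {f : X → EuclideanSpace ℝ (Fin 2)} {θ c : ℝ≥0∞} (hθ : θ < 1)
    (hJ : jacobianJ f x < c) :
    ∀ᶠ r in 𝓝[>] (0 : ℝ), θ * volume (f '' closedBall x r) ≤ c * μ (closedBall x r) := by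
  filter_upwards [eventually_measure_image_closedBall_le_of_jacobianJ_lt hJ,
    hx.eventually_mul_le_measure_closedBall hθ] with r hvol hμ
  calc θ * volume (f '' closedBall x r) ≤ θ * (c * ENNReal.ofReal (Real.pi * r ^ 2)) := by
        gcongr
    _ = c * (θ * ENNReal.ofReal (Real.pi * r ^ 2)) := mul_left_comm _ _ _
    _ ≤ c * μ (closedBall x r) := by gcongr

end Balls

theorem IsCompact.tendsto_measure_cthickening {X : Type*} [MetricSpace X] [MeasurableSpace X]
    [OpensMeasurableSpace X] {μ : Measure X} [IsLocallyFiniteMeasure μ] {A : Set X}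
    (hA : IsCompact A) : Tendsto (fun ε => μ (cthickening ε A)) (𝓝 0) (𝓝 (μ A)) := by
  obtain ⟨W, hAW, hW, hWfin⟩ := hA.exists_open_superset_measure_lt_top μ
  obtain ⟨R, hR, hRW⟩ := hA.exists_cthickening_subset_open hW hAW
  exact tendsto_measure_cthickening_of_isClosed
    ⟨R, hR, ((measure_mono hRW).trans_lt hWfin).ne⟩ hA.isClosed

section Covering

variable {X : Type*} [MetricSpace X] [MeasurableSpace X] [OpensMeasurableSpace X]
  [SecondCountableTopology X] {μ : Measure X} [IsLocallyFiniteMeasure μ]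
  {f : X → EuclideanSpace ℝ (Fin 2)} {A : Set X}

theorem mul_lintegral_multN_le_measure_of_jacobianJ_lt
    (hLusin : ∀ E : Set X, μ E = 0 → volume (f '' E) = 0) {U : Set X} (hU : IsOpen U)
    (hAU : A ⊆ U) {θ c : ℝ≥0∞} (hθ : θ < 1)
    (hdens : ∀ x ∈ A, IsAreaDensityPoint μ x)
    (hJ : ∀ x ∈ A, jacobianJ f x < c) (hinj : ∀ x ∈ A, ∃ V ∈ 𝓝 x, InjOn f V) :
    θ * ∫⁻ y, multN f A y ≤ c * μ U := by
  set T : Set (X × ℝ) := {p | p.1 ∈ A ∧ 0 < p.2 ∧ closedBall p.1 p.2 ⊆ U ∧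
    InjOn f (closedBall p.1 p.2) ∧
    θ * volume (f '' closedBall p.1 p.2) ≤ c * μ (closedBall p.1 p.2) ∧
    μ (closedBall p.1 (3 * p.2)) ≤ 36 * μ (closedBall p.1 p.2)}
  have hfine : ∀ x ∈ A, ∀ ε > (0 : ℝ), ∃ p ∈ T, p.2 ≤ ε ∧ p.1 = x := by
    intro x hx ε hε
    obtain ⟨V, hV, hVinj⟩ := hinj x hx
    have hsmall : ∀ᶠ r in 𝓝[>] (0 : ℝ), closedBall x r ⊆ U ∩ V :=
      nhdsWithin_le_nhds (eventually_closedBall_subset (inter_mem (hU.mem_nhds (hAU hx)) hV))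
    obtain ⟨r, ⟨hr0, hrε⟩, hrUV, hvol, hdoubling⟩ :=
      ((show ∀ᶠ r in 𝓝[>] (0 : ℝ), r ∈ Ioc 0 ε from Ioc_mem_nhdsGT hε).and <| hsmall.and <|
        ((hdens x hx).eventually_mul_measure_image_closedBall_le hθ (hJ x hx)).and <|
        (hdens x hx).eventually_measure_closedBall_three_mul_le).exists
    exact ⟨(x, r), ⟨hx, hr0, hrUV.trans inter_subset_left,
      hVinj.mono (hrUV.trans inter_subset_right), hvol, hdoubling⟩, hrε, rfl⟩
  obtain ⟨u, huT, hu, hdisj, hnull⟩ := Vitali.exists_disjoint_covering_ae μ A T 36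
    (fun p ↦ p.2) (fun p ↦ p.1) (fun p ↦ closedBall p.1 p.2) (fun _ _ ↦ Subset.rfl)
    (fun p hp ↦ by exact_mod_cast hp.2.2.2.2.2)
    (fun p hp ↦ (nonempty_ball.2 hp.2.1).mono ball_subset_interior_closedBall)
    (fun _ _ ↦ isClosed_closedBall) hfine
  have : Countable u := hu.to_subtype
  have hmult : ∫⁻ y, multN f A y ≤ ∑' p : u, volume (f '' closedBall p.1.1 p.1.2) :=
    lintegral_encard_fiber_le_tsum (fun p ↦ (huT p.2).2.2.2.1)
      (hLusin _ (by rwa [biUnion_eq_iUnion] at hnull))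
  calc θ * ∫⁻ y, multN f A y
      ≤ ∑' p : u, θ * volume (f '' closedBall p.1.1 p.1.2) := by
        rw [ENNReal.tsum_mul_left]; gcongr
    _ ≤ ∑' p : u, c * μ (closedBall p.1.1 p.1.2) :=
        ENNReal.tsum_le_tsum fun p ↦ (huT p.2).2.2.2.2.1
    _ = c * μ (⋃ p ∈ u, closedBall p.1 p.2) := by
        rw [ENNReal.tsum_mul_left, measure_biUnion hu hdisj fun _ _ ↦ measurableSet_closedBall]
    _ ≤ c * μ U := by
        gcongr
        exact iUnion₂_subset fun p hp ↦ (huT hp).2.2.1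

theorem lintegral_multN_le_mul_measure (hLusin : ∀ E : Set X, μ E = 0 → volume (f '' E) = 0)
    (hA : IsCompact A) {a : ℝ≥0∞} (ha : a ≠ ∞)
    (hdens : ∀ x ∈ A, IsAreaDensityPoint μ x)
    (hJ : ∀ x ∈ A, jacobianJ f x ≤ a) (hinj : ∀ x ∈ A, ∃ V ∈ 𝓝 x, InjOn f V) :
    ∫⁻ y, multN f A y ≤ a * μ A := by
  refine ENNReal.le_of_forall_lt_one_mul_le fun θ hθ ↦ ?_
  have hc : ∀ c ∈ Ioo a ∞, θ * ∫⁻ y, multN f A y ≤ c * μ A := by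
    rintro c ⟨hac, hc⟩
    refine ge_of_tendsto (ENNReal.Tendsto.const_mul
      (hA.tendsto_measure_cthickening.mono_left (nhdsWithin_le_nhds (s := Ioi 0))) (.inr hc.ne)) ?_
    filter_upwards [self_mem_nhdsWithin] with ε (hε : 0 < ε)
    calc θ * ∫⁻ y, multN f A y ≤ c * μ (thickening ε A) :=
          mul_lintegral_multN_le_measure_of_jacobianJ_lt hLusin isOpen_thickening
            (self_subset_thickening hε A) hθ hdens (fun x hx ↦ (hJ x hx).trans_lt hac) hinj
      _ ≤ c * μ (cthickening ε A) := by gcongr; exact thickening_subset_cthickening ε A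
  have : (𝓝[>] a).NeBot := nhdsGT_neBot_of_exists_gt ⟨∞, ha.lt_top⟩
  exact ge_of_tendsto (ENNReal.Tendsto.mul_const (tendsto_nhdsWithin_of_tendsto_nhds tendsto_id)
    (.inr hA.measure_lt_top.ne)) (mem_of_superset (Ioo_mem_nhdsGT ha.lt_top) hc)

end Covering

theorem multiplicity_integral_le_jacobian_integral_general
    {X : Type*} [MetricSpace X] [MeasurableSpace X] [BorelSpace X]
    (hsurf : ∃ U : Set (EuclideanSpace ℝ (Fin 2)),
      IsOpen U ∧ IsConnected U ∧ Nonempty (X ≃ₜ U))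
    (hloc : IsLocallyFiniteMeasure (μH[2] : Measure X))
    (f : X → EuclideanSpace ℝ (Fin 2))
    (hLusin : ∀ E : Set X, μH[2] E = 0 → volume (f '' E) = 0)
    (t : ℝ) (ht : t ∈ Set.Ioo (1 : ℝ) 2) (k : ℤ)
    (A : Set X) (hA : IsCompact A)
    (hdens : ∀ x ∈ A, IsH2DensityPoint x)
    (hJ : ∀ x ∈ A, ENNReal.ofReal (t ^ (k - 1)) ≤ jacobianJ f x ∧
      jacobianJ f x ≤ ENNReal.ofReal (t ^ k))
    (hinj : ∀ x ∈ A, ∃ V : Set X, IsOpen V ∧ x ∈ V ∧ Set.InjOn f V) :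
    ∫⁻ y, multN f A y ≤ ENNReal.ofReal t * ∫⁻ x in A, jacobianJ f x ∂(μH[2]) := by
  obtain ⟨U, -, -, ⟨e⟩⟩ := hsurf
  have : SecondCountableTopology X := e.isEmbedding.secondCountableTopology
  have ht0 : 0 < t := one_pos.trans ht.1
  have hinj' : ∀ x ∈ A, ∃ V ∈ 𝓝 x, InjOn f V := fun x hx ↦
    let ⟨V, hV, hxV, hVinj⟩ := hinj x hx
    ⟨V, hV.mem_nhds hxV, hVinj⟩
  calc ∫⁻ y, multN f A y ≤ ENNReal.ofReal (t ^ k) * μH[2] A :=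
        lintegral_multN_le_mul_measure hLusin hA ENNReal.ofReal_ne_top hdens
          (fun x hx ↦ (hJ x hx).2) hinj'
    _ = ENNReal.ofReal t * (ENNReal.ofReal (t ^ (k - 1)) * μH[2] A) := by
        rw [← mul_assoc, ← ENNReal.ofReal_mul ht0.le, ← zpow_one_add₀ ht0.ne', add_sub_cancel]
    _ = ENNReal.ofReal t * ∫⁻ _ in A, ENNReal.ofReal (t ^ (k - 1)) ∂(μH[2]) := by
        rw [setLIntegral_const]
    _ ≤ ENNReal.ofReal t * ∫⁻ x in A, jacobianJ f x ∂(μH[2]) := by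
        gcongr ENNReal.ofReal t * ?_
        exact setLIntegral_mono' hA.measurableSet fun x hx ↦ (hJ x hx).1

/-- Key covering estimate for the reverse area inequality: if `f` is
continuous, satisfies Lusin's condition (N), `A` is a compact set of `H²`-density points
on which `t^(k-1) ≤ J_f ≤ t^k` and near each point of which `f` is injective, then
`∫_{ℝ²} N(y, f, A) dy ≤ t ∫_A J_f dH²`. -/
theorem multiplicity_integral_le_jacobian_integral
    {X : Type*} [MetricSpace X] [MeasurableSpace X] [BorelSpace X]
    (hsurf : ∃ U : Set (EuclideanSpace ℝ (Fin 2)),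
      IsOpen U ∧ IsConnected U ∧ Nonempty (X ≃ₜ U))
    (hloc : IsLocallyFiniteMeasure (μH[2] : Measure X))
    (f : X → EuclideanSpace ℝ (Fin 2)) (hf : Continuous f)
    (hLusin : ∀ E : Set X, μH[2] E = 0 → volume (f '' E) = 0)
    (t : ℝ) (ht : t ∈ Set.Ioo (1 : ℝ) 2) (k : ℤ)
    (A : Set X) (hA : IsCompact A)
    (hdens : ∀ x ∈ A, IsH2DensityPoint x)
    (hJ : ∀ x ∈ A, ENNReal.ofReal (t ^ (k - 1)) ≤ jacobianJ f x ∧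
      jacobianJ f x ≤ ENNReal.ofReal (t ^ k))
    (hinj : ∀ x ∈ A, ∃ V : Set X, IsOpen V ∧ x ∈ V ∧ Set.InjOn f V) :
    ∫⁻ y, multN f A y ≤ ENNReal.ofReal t * ∫⁻ x in A, jacobianJ f x ∂(μH[2]) :=
  multiplicity_integral_le_jacobian_integral_general hsurf hloc f hLusin t ht k A hA hdens hJ hinj
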